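/- arXiv:1808.00656 — 2 statements merged into one kernel-verified Lean document; each statement's English description precedes it below -/
import Mathlib

section
/- Let W be a standard Brownian motion indexed by [0, T] on a probability space (Ω, F, P), let r ∈ ℝ, σ₀ > 0, 0 ≤ t < T, and define the random variable H := (1/T) ∫₀^T exp((r − σ₀²/2)(u − t) + σ₀ (W_u − W_t)) du. Let φ : ℝ → ℝ be twice continuously differentiable with |φ(z)| + |φ'(z)| + |φ''(z)| ≤ K(1 + |z|^m) for all z and some constants K ≥ 0, m ≥ 0. Then the function V₀(x) := e^{−r(T−t)} E[φ(xH)] is twice differentiable on (0, ∞) with V₀''(x) = e^{−r(T−t)} E[φ''(xH) H²], and there exists a constant K₃ ≥ 0 (depending on K, m, r, σ₀, t, T) such that |V₀''(x)| ≤ K₃(1 + x^m) for all x > 0. -/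
/-!
The time average `H` has finite moments of every order. Along its Riemann sums this follows
from Jensen's inequality and the Gaussian moment generating function
`E exp (l (W s - W t)) = exp (|s - t| l² / 2)`; Fatou's lemma passes the bound to the limit,
and the same Riemann sums show that `H` is measurable. With all moments of `H` finite, the
polynomial growth of `φ, φ', φ''` dominates the `x`-derivatives of `φ (x H)` and `φ' (x H) H`
locally uniformly in `x`, so one may differentiate twice under the expectation; the same
domination gives `|E[φ'' (x H) H²]| ≤ K (1 + x ^ m) E[2 H² + H ^ (⌈m⌉ + 2)]`.
-/

open MeasureTheory ProbabilityTheory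

/-- A standard Brownian motion indexed by `[0, T]` on a probability space `(Ω, F, P)`:
`W 0 = 0` a.s., independent increments, Gaussian increments `W v − W u ∼ N(0, v − u)`,
and a.s. continuous sample paths. -/
structure IsStandardBrownianMotion {Ω : Type*} [MeasurableSpace Ω]
    (P : Measure Ω) (T : ℝ) (W : ℝ → Ω → ℝ) : Prop where
  measurable : ∀ u ∈ Set.Icc (0 : ℝ) T, Measurable (W u)
  init : ∀ᵐ ω ∂P, W 0 ω = 0
  indep_increments : ∀ (n : ℕ) (t : Fin (n + 1) → ℝ), Monotone t →
    (∀ i, t i ∈ Set.Icc (0 : ℝ) T) →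
    iIndepFun
      (fun i : Fin n => fun ω => W (t i.succ) ω - W (t i.castSucc) ω) P
  gaussian_increments : ∀ u v : ℝ, 0 ≤ u → u ≤ v → v ≤ T →
    Measure.map (fun ω => W v ω - W u ω) P = gaussianReal 0 (Real.toNNReal (v - u))
  continuous_paths : ∀ᵐ ω ∂P, ContinuousOn (fun u => W u ω) (Set.Icc 0 T)

open Filter Set Topology
open scoped NNReal ENNReal

noncomputable def riemannMean (f : ℝ → ℝ) (T : ℝ) (N : ℕ) : ℝ :=
  ∑ i ∈ Finset.range N, (N : ℝ)⁻¹ * f (i * (T / N))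

lemma natCast_mul_div_mem_Icc {T : ℝ} (hT : 0 ≤ T) {i N : ℕ} (hi : i ≤ N) :
    (i : ℝ) * (T / N) ∈ Icc 0 T := by
  rcases Nat.eq_zero_or_pos N with rfl | hN
  · simp [hT]
  refine ⟨by positivity, ?_⟩
  calc (i : ℝ) * (T / N) ≤ N * (T / N) := by gcongr
    _ = T := mul_div_cancel₀ T (Nat.cast_pos.2 hN).ne'

lemma abs_mul_sub_intervalIntegral_le {f : ℝ → ℝ} {a b ε : ℝ} (hab : a ≤ b)
    (hf : IntervalIntegrable f volume a b) (hε : ∀ u ∈ Icc a b, |f u - f a| ≤ ε) :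
    |(b - a) * f a - ∫ u in a..b, f u| ≤ ε * (b - a) := by
  rw [← smul_eq_mul, ← intervalIntegral.integral_const,
    ← intervalIntegral.integral_sub intervalIntegrable_const hf]
  have := intervalIntegral.norm_integral_le_of_norm_le_const (C := ε)
    (f := fun u => f a - f u) fun u hu => by
      rw [uIoc_of_le hab] at hu
      rw [Real.norm_eq_abs, abs_sub_comm]
      exact hε u (Ioc_subset_Icc_self hu)
  rwa [abs_of_nonneg (sub_nonneg.2 hab)] at this

lemma abs_riemannMean_sub_le {f : ℝ → ℝ} {T ε : ℝ} (hT : 0 < T) {N : ℕ} (hN : N ≠ 0)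
    (hf : ContinuousOn f (Icc 0 T))
    (hε : ∀ i < N, ∀ u ∈ Icc ((i : ℝ) * (T / N)) ((i + 1 : ℕ) * (T / N)),
      |f u - f (i * (T / N))| ≤ ε) :
    |riemannMean f T N - (1 / T) * ∫ u in (0 : ℝ)..T, f u| ≤ ε := by
  set a : ℕ → ℝ := fun i => i * (T / N)
  have hN' : (0 : ℝ) < N := by positivity
  have hstep : ∀ i, a (i + 1) - a i = T / N := fun i => by simp only [a]; push_cast; ring
  have ha_mono : ∀ i, a i ≤ a (i + 1) := fun i =>
    sub_nonneg.1 ((hstep i).symm ▸ by positivity)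
  have hint : ∀ i < N, IntervalIntegrable f volume (a i) (a (i + 1)) := fun i hi =>
    (hf.mono (uIcc_of_le (ha_mono i) ▸ Icc_subset_Icc (natCast_mul_div_mem_Icc hT.le hi.le).1
      (natCast_mul_div_mem_Icc hT.le hi).2)).intervalIntegrable
  have hsum :
      ∫ u in (0 : ℝ)..T, f u = ∑ i ∈ Finset.range N, ∫ u in a i..a (i + 1), f u := by
    rw [intervalIntegral.sum_integral_adjacent_intervals hint]
    simp [a, mul_div_cancel₀ T hN'.ne']
  calc |riemannMean f T N - (1 / T) * ∫ u in (0 : ℝ)..T, f u|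
      = 1 / T * |∑ i ∈ Finset.range N,
          ((a (i + 1) - a i) * f (a i) - ∫ u in a i..a (i + 1), f u)| := by
        rw [← abs_of_pos (one_div_pos.2 hT), ← abs_mul, abs_of_pos (one_div_pos.2 hT), hsum,
          Finset.sum_sub_distrib, mul_sub, Finset.mul_sum, riemannMean]
        congr 2
        rw [Finset.mul_sum]
        refine Finset.sum_congr rfl fun i _ => ?_
        rw [hstep]
        simp only [a]
        field_simp
    _ ≤ 1 / T * ∑ _i ∈ Finset.range N, ε * (T / N) := by
        gcongr
        refine (Finset.abs_sum_le_sum_abs _ _).trans (Finset.sum_le_sum fun i hi => ?_)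
        rw [← hstep i]
        exact abs_mul_sub_intervalIntegral_le (ha_mono i) (hint i (Finset.mem_range.1 hi))
          (hε i (Finset.mem_range.1 hi))
    _ = ε := by rw [Finset.sum_const, Finset.card_range, nsmul_eq_mul]; field_simp

lemma tendsto_riemannMean {f : ℝ → ℝ} {T : ℝ} (hT : 0 < T) (hf : ContinuousOn f (Icc 0 T)) :
    Tendsto (riemannMean f T) atTop (𝓝 ((1 / T) * ∫ u in (0 : ℝ)..T, f u)) := by
  rw [Metric.tendsto_atTop]
  intro ε hε
  obtain ⟨δ, hδ, hfδ⟩ := Metric.uniformContinuousOn_iff.1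
    (isCompact_Icc.uniformContinuousOn_of_continuous hf) (ε / 2) (half_pos hε)
  obtain ⟨N₀, hN₀⟩ := exists_nat_gt (T / δ)
  refine ⟨N₀, fun N hN => ?_⟩
  have hTN : T / δ < N := hN₀.trans_le (Nat.cast_le.2 hN)
  have hN' : (0 : ℝ) < N := (div_pos hT hδ).trans hTN
  have hmesh : T / N < δ := (div_lt_comm₀ hN' hδ).2 hTN
  refine (abs_riemannMean_sub_le hT (by exact_mod_cast hN'.ne') hf fun i hi u hu => ?_).trans_lt
    (half_lt_self hε)
  have hi0 := natCast_mul_div_mem_Icc hT.le hi.le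
  have hu0 : u ∈ Icc 0 T :=
    ⟨hi0.1.trans hu.1, hu.2.trans (natCast_mul_div_mem_Icc hT.le hi).2⟩
  have hdist : dist u (i * (T / N)) < δ := by
    rw [Real.dist_eq, abs_of_nonneg (by linarith [hu.1])]
    have := hu.2
    push_cast at this
    linarith
  exact (hfδ u hu0 _ hi0 hdist).le

section TimeAverage

variable {Ω : Type*} [MeasurableSpace Ω] {P : Measure Ω} {g : ℝ → Ω → ℝ} {T : ℝ}

lemma measurable_riemannMean (hT : 0 ≤ T) (hg : ∀ u ∈ Icc 0 T, Measurable (g u)) (N : ℕ) :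
    Measurable fun ω => riemannMean (fun u => g u ω) T N :=
  Finset.measurable_sum _ fun _ hi =>
    (hg _ (natCast_mul_div_mem_Icc hT (Finset.mem_range.1 hi).le)).const_mul _

lemma ae_tendsto_riemannMean (hT : 0 < T)
    (hcont : ∀ᵐ ω ∂P, ContinuousOn (fun u => g u ω) (Icc 0 T)) :
    ∀ᵐ ω ∂P, Tendsto (fun N => riemannMean (fun u => g u ω) T N) atTop
      (𝓝 ((1 / T) * ∫ u in (0 : ℝ)..T, g u ω)) := by
  filter_upwards [hcont] with ω hω using tendsto_riemannMean hT hω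

lemma aemeasurable_timeAverage (hT : 0 < T) (hg : ∀ u ∈ Icc 0 T, Measurable (g u))
    (hcont : ∀ᵐ ω ∂P, ContinuousOn (fun u => g u ω) (Icc 0 T)) :
    AEMeasurable (fun ω => (1 / T) * ∫ u in (0 : ℝ)..T, g u ω) P :=
  aemeasurable_of_tendsto_metrizable_ae atTop
    (fun N => (measurable_riemannMean hT.le hg N).aemeasurable) (ae_tendsto_riemannMean hT hcont)

lemma lintegral_riemannMean_pow_le (hT : 0 ≤ T) (hg : ∀ u ∈ Icc 0 T, Measurable (g u))
    (hg₀ : ∀ u ∈ Icc 0 T, ∀ ω, 0 ≤ g u ω) {n : ℕ} {C : ℝ≥0∞}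
    (hC : ∀ u ∈ Icc 0 T, ∫⁻ ω, ENNReal.ofReal (g u ω ^ n) ∂P ≤ C) {N : ℕ}
    (hN : N ≠ 0) :
    ∫⁻ ω, ENNReal.ofReal (riemannMean (fun u => g u ω) T N ^ n) ∂P ≤ C := by
  have hnode : ∀ i ∈ Finset.range N, (i : ℝ) * (T / N) ∈ Icc 0 T := fun i hi =>
    natCast_mul_div_mem_Icc hT (Finset.mem_range.1 hi).le
  have hjensen : ∀ ω, riemannMean (fun u => g u ω) T N ^ n
      ≤ ∑ i ∈ Finset.range N, (N : ℝ)⁻¹ * g (i * (T / N)) ω ^ n := fun ω =>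
    Real.pow_arith_mean_le_arith_mean_pow (Finset.range N) _ _ (fun _ _ => by positivity)
      (by simp [hN]) (fun i hi => hg₀ _ (hnode i hi) ω) n
  calc ∫⁻ ω, ENNReal.ofReal (riemannMean (fun u => g u ω) T N ^ n) ∂P
      ≤ ∫⁻ ω, ∑ i ∈ Finset.range N,
          ENNReal.ofReal (N : ℝ)⁻¹ * ENNReal.ofReal (g (i * (T / N)) ω ^ n) ∂P := by
        refine lintegral_mono fun ω => (ENNReal.ofReal_le_ofReal (hjensen ω)).trans_eq ?_
        rw [ENNReal.ofReal_sum_of_nonneg fun i hi => by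
          have := hg₀ _ (hnode i hi) ω; positivity]
        simp_rw [ENNReal.ofReal_mul (inv_nonneg.2 (Nat.cast_nonneg N))]
    _ = ∑ i ∈ Finset.range N,
          ENNReal.ofReal (N : ℝ)⁻¹ *
            ∫⁻ ω, ENNReal.ofReal (g (i * (T / N)) ω ^ n) ∂P := by
        rw [lintegral_finsetSum _ fun i hi =>
          ((hg _ (hnode i hi)).pow_const n).ennreal_ofReal.const_mul _]
        refine Finset.sum_congr rfl fun i hi => ?_
        exact lintegral_const_mul _ ((hg _ (hnode i hi)).pow_const n).ennreal_ofReal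
    _ ≤ ∑ _i ∈ Finset.range N, ENNReal.ofReal (N : ℝ)⁻¹ * C :=
        Finset.sum_le_sum fun i hi => by gcongr; exact hC _ (hnode i hi)
    _ = C := by
        rw [Finset.sum_const, Finset.card_range, nsmul_eq_mul, ← mul_assoc,
          ENNReal.ofReal_inv_of_pos (by positivity), ENNReal.ofReal_natCast,
          ENNReal.mul_inv_cancel (by exact_mod_cast hN) (ENNReal.natCast_ne_top N), one_mul]

lemma lintegral_timeAverage_pow_le (hT : 0 < T) (hg : ∀ u ∈ Icc 0 T, Measurable (g u))
    (hcont : ∀ᵐ ω ∂P, ContinuousOn (fun u => g u ω) (Icc 0 T))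
    (hg₀ : ∀ u ∈ Icc 0 T, ∀ ω, 0 ≤ g u ω) {n : ℕ} {C : ℝ≥0∞}
    (hC : ∀ u ∈ Icc 0 T, ∫⁻ ω, ENNReal.ofReal (g u ω ^ n) ∂P ≤ C) :
    ∫⁻ ω, ENNReal.ofReal (((1 / T) * ∫ u in (0 : ℝ)..T, g u ω) ^ n) ∂P ≤ C := by
  have hlim : ∀ᵐ ω ∂P, ENNReal.ofReal (((1 / T) * ∫ u in (0 : ℝ)..T, g u ω) ^ n)
      = liminf (fun N => ENNReal.ofReal (riemannMean (fun u => g u ω) T N ^ n)) atTop := by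
    filter_upwards [ae_tendsto_riemannMean hT hcont] with ω hω
    exact ((ENNReal.continuous_ofReal.tendsto _).comp
      (((continuous_pow n).tendsto _).comp hω)).liminf_eq.symm
  calc ∫⁻ ω, ENNReal.ofReal (((1 / T) * ∫ u in (0 : ℝ)..T, g u ω) ^ n) ∂P
      = ∫⁻ ω, liminf (fun N => ENNReal.ofReal (riemannMean (fun u => g u ω) T N ^ n))
          atTop ∂P :=
        lintegral_congr_ae hlim
    _ ≤ liminf (fun N => ∫⁻ ω, ENNReal.ofReal (riemannMean (fun u => g u ω) T N ^ n) ∂P)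
          atTop :=
        lintegral_liminf_le fun N =>
          ((measurable_riemannMean hT.le hg N).pow_const n).ennreal_ofReal
    _ ≤ liminf (fun _ : ℕ => C) atTop :=
        liminf_le_liminf (eventually_atTop.2 ⟨1, fun N hN =>
          lintegral_riemannMean_pow_le hT.le hg hg₀ hC (Nat.one_le_iff_ne_zero.1 hN)⟩)
    _ = C := liminf_const C

end TimeAverage

lemma lintegral_exp_mul_gaussianReal (μ l : ℝ) (v : ℝ≥0) :
    ∫⁻ y, ENNReal.ofReal (Real.exp (l * y)) ∂gaussianReal μ v
      = ENNReal.ofReal (Real.exp (μ * l + v * l ^ 2 / 2)) := by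
  rw [← ofReal_integral_eq_lintegral_ofReal (integrable_exp_mul_gaussianReal l)
    (ae_of_all _ fun _ => (Real.exp_pos _).le), ← mgf_gaussianReal (Measure.map_id) l]
  rfl

namespace IsStandardBrownianMotion

variable {Ω : Type*} [MeasurableSpace Ω] {P : Measure Ω} {T : ℝ} {W : ℝ → Ω → ℝ}

lemma lintegral_exp_mul_sub_of_le (hW : IsStandardBrownianMotion P T W) {s t : ℝ}
    (ht : t ∈ Icc 0 T) (hs : s ∈ Icc 0 T) (hts : t ≤ s) (l : ℝ) :
    ∫⁻ ω, ENNReal.ofReal (Real.exp (l * (W s ω - W t ω))) ∂P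
      = ENNReal.ofReal (Real.exp ((s - t) * l ^ 2 / 2)) := by
  have hinc : Measurable fun ω => W s ω - W t ω := (hW.measurable s hs).sub (hW.measurable t ht)
  rw [← lintegral_map (f := fun y => ENNReal.ofReal (Real.exp (l * y))) (by fun_prop) hinc,
    hW.gaussian_increments t s ht.1 hts hs.2, lintegral_exp_mul_gaussianReal,
    Real.coe_toNNReal _ (sub_nonneg.2 hts), zero_mul, zero_add]

lemma lintegral_exp_mul_sub (hW : IsStandardBrownianMotion P T W) {s t : ℝ}
    (hs : s ∈ Icc 0 T) (ht : t ∈ Icc 0 T) (l : ℝ) :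
    ∫⁻ ω, ENNReal.ofReal (Real.exp (l * (W s ω - W t ω))) ∂P
      = ENNReal.ofReal (Real.exp (|s - t| * l ^ 2 / 2)) := by
  rcases le_total t s with hts | hst
  · rw [hW.lintegral_exp_mul_sub_of_le ht hs hts, abs_of_nonneg (sub_nonneg.2 hts)]
  · simp_rw [← neg_sub (W t _), mul_neg, ← neg_mul]
    rw [hW.lintegral_exp_mul_sub_of_le hs ht hst, abs_of_nonpos (sub_nonpos.2 hst), neg_sub,
      neg_sq]

lemma lintegral_exp_drift_pow_le (hW : IsStandardBrownianMotion P T W) {s t : ℝ}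
    (hs : s ∈ Icc 0 T) (ht : t ∈ Icc 0 T) (a σ : ℝ) (n : ℕ) :
    ∫⁻ ω, ENNReal.ofReal (Real.exp (a * (s - t) + σ * (W s ω - W t ω)) ^ n) ∂P
      ≤ ENNReal.ofReal (Real.exp (n * |a| * T + T * (n * σ) ^ 2 / 2)) := by
  have hst : |s - t| ≤ T :=
    abs_sub_le_iff.2 ⟨by linarith [hs.2, ht.1], by linarith [hs.1, ht.2]⟩
  have hsplit : ∀ ω, Real.exp (a * (s - t) + σ * (W s ω - W t ω)) ^ n
      = Real.exp (n * (a * (s - t))) * Real.exp ((n * σ) * (W s ω - W t ω)) := fun ω => by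
    rw [← Real.exp_nat_mul, ← Real.exp_add]; ring_nf
  simp_rw [hsplit, ENNReal.ofReal_mul (Real.exp_pos _).le]
  rw [lintegral_const_mul' _ _ ENNReal.ofReal_ne_top, hW.lintegral_exp_mul_sub hs ht,
    ← ENNReal.ofReal_mul (Real.exp_pos _).le, ← Real.exp_add]
  gcongr ENNReal.ofReal (Real.exp ?_)
  have hdrift : n * (a * (s - t)) ≤ n * |a| * T := by
    rw [mul_assoc]
    refine mul_le_mul_of_nonneg_left ?_ n.cast_nonneg
    calc a * (s - t) ≤ |a| * |s - t| := (le_abs_self _).trans (abs_mul _ _).le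
      _ ≤ |a| * T := by gcongr
  have hvar : |s - t| * (n * σ) ^ 2 / 2 ≤ T * (n * σ) ^ 2 / 2 := by gcongr
  linarith

lemma integrable_timeAverage_exp_pow (hW : IsStandardBrownianMotion P T W) (hT : 0 < T) {t : ℝ}
    (ht : t ∈ Icc 0 T) (a σ : ℝ) (n : ℕ) :
    Integrable (fun ω => ((1 / T) * ∫ u in (0 : ℝ)..T,
      Real.exp (a * (u - t) + σ * (W u ω - W t ω))) ^ n) P := by
  set g : ℝ → Ω → ℝ := fun u ω => Real.exp (a * (u - t) + σ * (W u ω - W t ω))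
  have hg : ∀ u ∈ Icc 0 T, Measurable (g u) := fun u hu =>
    (measurable_const.add (((hW.measurable u hu).sub (hW.measurable t ht)).const_mul σ)).exp
  have hcont : ∀ᵐ ω ∂P, ContinuousOn (fun u => g u ω) (Icc 0 T) := by
    filter_upwards [hW.continuous_paths] with ω hω
    exact (((continuous_const.mul (continuous_id.sub continuous_const)).continuousOn).add
      (continuousOn_const.mul (hω.sub continuousOn_const))).rexp
  have hA₀ : ∀ ω, 0 ≤ (1 / T) * ∫ u in (0 : ℝ)..T, g u ω := fun ω =>
    mul_nonneg (by positivity)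
      (intervalIntegral.integral_nonneg hT.le fun _ _ => (Real.exp_pos _).le)
  refine ⟨((aemeasurable_timeAverage hT hg hcont).pow_const n).aestronglyMeasurable, ?_⟩
  rw [hasFiniteIntegral_iff_ofReal (ae_of_all _ fun ω => pow_nonneg (hA₀ ω) n)]
  exact (lintegral_timeAverage_pow_le hT hg hcont (fun _ _ _ => (Real.exp_pos _).le)
    fun u hu => hW.lintegral_exp_drift_pow_le hu ht a σ n).trans_lt ENNReal.ofReal_lt_top

end IsStandardBrownianMotion

lemma rpow_le_one_add_pow_ceil {y m : ℝ} (hy : 0 ≤ y) (hm : 0 ≤ m) :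
    y ^ m ≤ 1 + y ^ ⌈m⌉₊ := by
  rcases le_total y 1 with hy1 | hy1
  · linarith [Real.rpow_le_one hy hy1 hm, pow_nonneg hy ⌈m⌉₊]
  · have := Real.rpow_le_rpow_of_exponent_le hy1 (Nat.le_ceil m)
    rw [Real.rpow_natCast] at this
    linarith

section PolynomialGrowth

variable {f f' : ℝ → ℝ} {K m : ℝ}

lemma abs_comp_mul_mul_pow_le (hK : 0 ≤ K) (hm : 0 ≤ m)
    (hf : ∀ z, |f z| ≤ K * (1 + |z| ^ m)) {x R : ℝ} (hx : |x| ≤ R) (y : ℝ) (j : ℕ) :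
    |f (x * y) * y ^ j| ≤ K * (1 + R ^ m) * (2 * |y| ^ j + |y| ^ (⌈m⌉₊ + j)) := by
  have hxR : |x| ^ m ≤ R ^ m := Real.rpow_le_rpow (abs_nonneg x) hx hm
  have hym := rpow_le_one_add_pow_ceil (abs_nonneg y) hm
  have hxm : 0 ≤ |x| ^ m := by positivity
  have hyj : 0 ≤ |y| ^ j := by positivity
  have hfxy : |f (x * y)| ≤ K * ((1 + R ^ m) * (2 + |y| ^ ⌈m⌉₊)) := by
    refine (hf _).trans (mul_le_mul_of_nonneg_left ?_ hK)
    rw [abs_mul, Real.mul_rpow (abs_nonneg x) (abs_nonneg y)]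
    nlinarith [Real.rpow_nonneg (abs_nonneg y) m]
  rw [abs_mul, abs_pow, pow_add]
  calc |f (x * y)| * |y| ^ j ≤ K * ((1 + R ^ m) * (2 + |y| ^ ⌈m⌉₊)) * |y| ^ j := by gcongr
    _ = _ := by ring

variable {Ω : Type*} [MeasurableSpace Ω] {μ : Measure Ω} {Y : Ω → ℝ}

lemma integrable_two_mul_abs_pow_add_abs_pow (hY : ∀ k : ℕ, Integrable (fun ω => Y ω ^ k) μ)
    (j k : ℕ) : Integrable (fun ω => 2 * |Y ω| ^ j + |Y ω| ^ k) μ := by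
  have habs : ∀ k : ℕ, Integrable (fun ω => |Y ω| ^ k) μ := fun k => by
    simpa only [abs_pow] using (hY k).abs
  exact ((habs j).const_mul 2).add (habs k)

lemma aestronglyMeasurable_comp_mul_mul_pow (hY : ∀ k : ℕ, Integrable (fun ω => Y ω ^ k) μ)
    (hf : Continuous f) (x : ℝ) (j : ℕ) :
    AEStronglyMeasurable (fun ω => f (x * Y ω) * Y ω ^ j) μ :=
  (by fun_prop : Continuous fun y => f (x * y) * y ^ j).comp_aestronglyMeasurable
    (by simpa only [pow_one] using (hY 1).aestronglyMeasurable)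

lemma integrable_comp_mul_mul_pow (hY : ∀ k : ℕ, Integrable (fun ω => Y ω ^ k) μ)
    (hf : Continuous f) (hK : 0 ≤ K) (hm : 0 ≤ m) (hfK : ∀ z, |f z| ≤ K * (1 + |z| ^ m))
    (x : ℝ) (j : ℕ) : Integrable (fun ω => f (x * Y ω) * Y ω ^ j) μ :=
  ((integrable_two_mul_abs_pow_add_abs_pow hY j (⌈m⌉₊ + j)).const_mul _).mono'
    (aestronglyMeasurable_comp_mul_mul_pow hY hf x j)
    (ae_of_all _ fun ω => abs_comp_mul_mul_pow_le hK hm hfK le_rfl (Y ω) j)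

lemma abs_integral_comp_mul_mul_pow_le (hY : ∀ k : ℕ, Integrable (fun ω => Y ω ^ k) μ)
    (hK : 0 ≤ K) (hm : 0 ≤ m) (hfK : ∀ z, |f z| ≤ K * (1 + |z| ^ m)) (x : ℝ) (j : ℕ) :
    |∫ ω, f (x * Y ω) * Y ω ^ j ∂μ|
      ≤ K * (1 + |x| ^ m) * ∫ ω, (2 * |Y ω| ^ j + |Y ω| ^ (⌈m⌉₊ + j)) ∂μ := by
  rw [← integral_const_mul, ← Real.norm_eq_abs]
  exact norm_integral_le_of_norm_le
    ((integrable_two_mul_abs_pow_add_abs_pow hY j (⌈m⌉₊ + j)).const_mul _)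
    (ae_of_all _ fun ω => abs_comp_mul_mul_pow_le hK hm hfK (le_refl |x|) (Y ω) j)

lemma hasDerivAt_integral_comp_mul_mul_pow (hY : ∀ k : ℕ, Integrable (fun ω => Y ω ^ k) μ)
    (hf : ∀ z, HasDerivAt f (f' z) z) (hf' : Continuous f') (hK : 0 ≤ K) (hm : 0 ≤ m)
    (hfK : ∀ z, |f z| ≤ K * (1 + |z| ^ m)) (hf'K : ∀ z, |f' z| ≤ K * (1 + |z| ^ m))
    (x₀ : ℝ) (j : ℕ) :
    HasDerivAt (fun x => ∫ ω, f (x * Y ω) * Y ω ^ j ∂μ)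
      (∫ ω, f' (x₀ * Y ω) * Y ω ^ (j + 1) ∂μ) x₀ := by
  have hfc : Continuous f := continuous_iff_continuousAt.2 fun z => (hf z).continuousAt
  have hball : ∀ x ∈ Metric.ball x₀ 1, |x| ≤ |x₀| + 1 := fun x hx => by
    have := abs_sub_abs_le_abs_sub x x₀
    rw [Metric.mem_ball, Real.dist_eq] at hx
    linarith
  refine (hasDerivAt_integral_of_dominated_loc_of_deriv_le (Metric.ball_mem_nhds x₀ one_pos)
    (Eventually.of_forall fun x => aestronglyMeasurable_comp_mul_mul_pow hY hfc x j)
    (integrable_comp_mul_mul_pow hY hfc hK hm hfK x₀ j)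
    (aestronglyMeasurable_comp_mul_mul_pow hY hf' x₀ (j + 1))
    (ae_of_all _ fun ω x hx => abs_comp_mul_mul_pow_le hK hm hf'K (hball x hx) (Y ω) (j + 1))
    ((integrable_two_mul_abs_pow_add_abs_pow hY (j + 1) (⌈m⌉₊ + (j + 1))).const_mul _)
    (ae_of_all _ fun ω x _ => ?_)).2
  exact (((hf _).comp x (hasDerivAt_mul_const (Y ω))).mul_const (Y ω ^ j)).congr_deriv (by ring)

end PolynomialGrowth

theorem asian_bs_price_second_deriv_general
    {Ω : Type*} [MeasurableSpace Ω] (P : Measure Ω)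
    (T r σ₀ t : ℝ) (ht : 0 ≤ t) (htT : t < T)
    (W : ℝ → Ω → ℝ) (hW : IsStandardBrownianMotion P T W)
    (H : Ω → ℝ)
    (hH : H = fun ω => (1 / T) * ∫ u in (0 : ℝ)..T,
      Real.exp ((r - σ₀ ^ 2 / 2) * (u - t) + σ₀ * (W u ω - W t ω)))
    (φ : ℝ → ℝ) (K m : ℝ) (hK : 0 ≤ K) (hm : 0 ≤ m)
    (hφ : ContDiff ℝ 2 φ)
    (hgrowth : ∀ z : ℝ, |φ z| + |deriv φ z| + |deriv (deriv φ) z| ≤ K * (1 + |z| ^ m))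
    (V₀ : ℝ → ℝ)
    (hV₀ : V₀ = fun x => Real.exp (-(r * (T - t))) * ∫ ω, φ (x * H ω) ∂P) :
    (∀ x ∈ Set.Ioi (0 : ℝ), DifferentiableAt ℝ V₀ x) ∧
    (∀ x ∈ Set.Ioi (0 : ℝ), HasDerivAt (deriv V₀)
      (Real.exp (-(r * (T - t))) * ∫ ω, deriv (deriv φ) (x * H ω) * H ω ^ 2 ∂P) x) ∧
    ∃ K₃ : ℝ, 0 ≤ K₃ ∧ ∀ x : ℝ, 0 < x →
      |Real.exp (-(r * (T - t))) * ∫ ω, deriv (deriv φ) (x * H ω) * H ω ^ 2 ∂P|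
        ≤ K₃ * (1 + x ^ m) := by
  set c := Real.exp (-(r * (T - t)))
  have hH_mom : ∀ k : ℕ, Integrable (fun ω => H ω ^ k) P := fun k => by
    subst hH
    exact hW.integrable_timeAverage_exp_pow (ht.trans_lt htT) ⟨ht, htT.le⟩ _ _ k
  have hφ' : ContDiff ℝ 1 (deriv φ) := ContDiff.deriv' (n := 1) hφ
  have hd1 : ∀ z, HasDerivAt φ (deriv φ z) z := fun z =>
    ((hφ.differentiable (by norm_num)) z).hasDerivAt
  have hd2 : ∀ z, HasDerivAt (deriv φ) (deriv (deriv φ) z) z := fun z =>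
    ((hφ'.differentiable one_ne_zero) z).hasDerivAt
  have hb0 : ∀ z, |φ z| ≤ K * (1 + |z| ^ m) := fun z => by
    linarith [hgrowth z, abs_nonneg (deriv φ z), abs_nonneg (deriv (deriv φ) z)]
  have hb1 : ∀ z, |deriv φ z| ≤ K * (1 + |z| ^ m) := fun z => by
    linarith [hgrowth z, abs_nonneg (φ z), abs_nonneg (deriv (deriv φ) z)]
  have hb2 : ∀ z, |deriv (deriv φ) z| ≤ K * (1 + |z| ^ m) := fun z => by
    linarith [hgrowth z, abs_nonneg (φ z), abs_nonneg (deriv φ z)]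
  have hV₀' : ∀ x, HasDerivAt V₀ (c * ∫ ω, deriv φ (x * H ω) * H ω ^ 1 ∂P) x := by
    intro x
    have := hasDerivAt_integral_comp_mul_mul_pow hH_mom hd1 hφ'.continuous hK hm hb0 hb1 x 0
    simpa only [hV₀, pow_zero, mul_one, zero_add] using this.const_mul c
  have hV₀'' : ∀ x, HasDerivAt (deriv V₀)
      (c * ∫ ω, deriv (deriv φ) (x * H ω) * H ω ^ 2 ∂P) x := by
    rw [show deriv V₀ = _ from funext fun x => (hV₀' x).deriv]
    exact fun x => (hasDerivAt_integral_comp_mul_mul_pow hH_mom hd2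
      (hφ'.continuous_deriv le_rfl) hK hm hb1 hb2 x 1).const_mul c
  refine ⟨fun x _ => (hV₀' x).differentiableAt, fun x _ => hV₀'' x, ?_⟩
  set B := ∫ ω, (2 * |H ω| ^ 2 + |H ω| ^ (⌈m⌉₊ + 2)) ∂P
  have hB : 0 ≤ B := integral_nonneg fun ω => by positivity
  refine ⟨c * K * B, by positivity, fun x hx => ?_⟩
  have hbound := abs_integral_comp_mul_mul_pow_le hH_mom hK hm hb2 x 2 (μ := P)
  rw [abs_of_pos hx] at hbound
  rw [abs_mul, abs_of_pos (Real.exp_pos _)]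
  calc c * |∫ ω, deriv (deriv φ) (x * H ω) * H ω ^ 2 ∂P|
      ≤ c * (K * (1 + x ^ m) * B) := by gcongr
    _ = c * K * B * (1 + x ^ m) := by ring

/-- The Black–Scholes Asian option price `V₀(x) = e^{−r(T−t)} E[φ(xH)]`, with
`H = (1/T)∫₀^T exp((r − σ₀²/2)(u−t) + σ₀(W_u − W_t)) du`, is twice differentiable
on `(0, ∞)` with `V₀''(x) = e^{−r(T−t)} E[φ''(xH) H²]`, and `|V₀''(x)| ≤ K₃(1 + x^m)`
for some constant `K₃ ≥ 0`, whenever the payoff `φ` is `C²` with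
`|φ| + |φ'| + |φ''|` of polynomial growth of order `m`. -/
theorem asian_bs_price_second_deriv
    {Ω : Type*} [MeasurableSpace Ω] (P : Measure Ω) [IsProbabilityMeasure P]
    (T r σ₀ t : ℝ) (hσ₀ : 0 < σ₀) (ht : 0 ≤ t) (htT : t < T)
    (W : ℝ → Ω → ℝ) (hW : IsStandardBrownianMotion P T W)
    (H : Ω → ℝ)
    (hH : H = fun ω => (1 / T) * ∫ u in (0 : ℝ)..T,
      Real.exp ((r - σ₀ ^ 2 / 2) * (u - t) + σ₀ * (W u ω - W t ω)))
    (φ : ℝ → ℝ) (K m : ℝ) (hK : 0 ≤ K) (hm : 0 ≤ m)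
    (hφ : ContDiff ℝ 2 φ)
    (hgrowth : ∀ z : ℝ, |φ z| + |deriv φ z| + |deriv (deriv φ) z| ≤ K * (1 + |z| ^ m))
    (V₀ : ℝ → ℝ)
    (hV₀ : V₀ = fun x => Real.exp (-(r * (T - t))) * ∫ ω, φ (x * H ω) ∂P) :
    (∀ x ∈ Set.Ioi (0 : ℝ), DifferentiableAt ℝ V₀ x) ∧
    (∀ x ∈ Set.Ioi (0 : ℝ), HasDerivAt (deriv V₀)
      (Real.exp (-(r * (T - t))) * ∫ ω, deriv (deriv φ) (x * H ω) * H ω ^ 2 ∂P) x) ∧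
    ∃ K₃ : ℝ, 0 ≤ K₃ ∧ ∀ x : ℝ, 0 < x →
      |Real.exp (-(r * (T - t))) * ∫ ω, deriv (deriv φ) (x * H ω) * H ω ^ 2 ∂P|
        ≤ K₃ * (1 + x ^ m) :=
  asian_bs_price_second_deriv_general P T r σ₀ t ht htT W hW H hH φ K m hK hm hφ hgrowth V₀ hV₀
end

section
/- Let r, σ₀ ∈ ℝ, T > 0, and let V : (0, T) × (0, ∞) → ℝ be infinitely differentiable. Suppose V satisfies the partial differential equation 2·∂ₜV(t,x) + r·(x·∂ₓV(t,x) − V(t,x)) + (1/2)·σ₀²·x²·∂²ₓₓV(t,x) = 0 for all (t,x) ∈ (0,T) × (0,∞). Then the function Q := ∂²ₓₓV satisfies 2·∂ₜQ(t,x) + (r + σ₀²)·Q(t,x) + (r + 2σ₀²)·x·∂ₓQ(t,x) + (1/2)·σ₀²·x²·∂²ₓₓQ(t,x) = 0 for all (t,x) ∈ (0,T) × (0,∞). -/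
open Set Filter Topology

namespace GammaPDE

/-- directional partial derivative -/
noncomputable def dv (v : ℝ × ℝ) (w : ℝ × ℝ → ℝ) : ℝ × ℝ → ℝ :=
  fun p => fderiv ℝ w p v

lemma top_add_one : ((⊤ : ℕ∞) : WithTop ℕ∞) + 1 ≤ ((⊤ : ℕ∞) : WithTop ℕ∞) := by
  simp

lemma one_le_top : (1 : WithTop ℕ∞) ≤ ((⊤ : ℕ∞) : WithTop ℕ∞) := by
  exact_mod_cast le_top

lemma smooth_dv {s : Set (ℝ × ℝ)} (hs : IsOpen s) {w : ℝ × ℝ → ℝ}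
    (hw : ContDiffOn ℝ (⊤ : ℕ∞) w s) (v : ℝ × ℝ) :
    ContDiffOn ℝ (⊤ : ℕ∞) (dv v w) s :=
  (hw.fderiv_of_isOpen hs top_add_one).clm_apply contDiffOn_const

lemma hasDerivAt_slice2 {s : Set (ℝ × ℝ)} (hs : IsOpen s) {w : ℝ × ℝ → ℝ}
    (hw : ContDiffOn ℝ (⊤ : ℕ∞) w s) {p : ℝ × ℝ} (hp : p ∈ s) :
    HasDerivAt (fun z => w (p.1, z)) (dv (0, 1) w p) p.2 := by
  have hd : HasFDerivAt w (fderiv ℝ w p) p :=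
    ((hw.differentiableOn (zero_lt_one.trans_le one_le_top).ne').differentiableAt (hs.mem_nhds hp)).hasFDerivAt
  have hline : HasDerivAt (fun z : ℝ => (p.1, z)) ((0 : ℝ), (1 : ℝ)) p.2 :=
    HasDerivAt.prodMk (hasDerivAt_const _ _) (hasDerivAt_id _)
  have := hd.comp_hasDerivAt (x := p.2) (by simpa using hline)
  exact this

lemma hasDerivAt_slice1 {s : Set (ℝ × ℝ)} (hs : IsOpen s) {w : ℝ × ℝ → ℝ}
    (hw : ContDiffOn ℝ (⊤ : ℕ∞) w s) {p : ℝ × ℝ} (hp : p ∈ s) :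
    HasDerivAt (fun z => w (z, p.2)) (dv (1, 0) w p) p.1 := by
  have hd : HasFDerivAt w (fderiv ℝ w p) p :=
    ((hw.differentiableOn (zero_lt_one.trans_le one_le_top).ne').differentiableAt (hs.mem_nhds hp)).hasFDerivAt
  have hline : HasDerivAt (fun z : ℝ => (z, p.2)) ((1 : ℝ), (0 : ℝ)) p.1 :=
    HasDerivAt.prodMk (hasDerivAt_id _) (hasDerivAt_const _ _)
  have := hd.comp_hasDerivAt (x := p.1) (by simpa using hline)
  exact this

lemma clairaut {s : Set (ℝ × ℝ)} (hs : IsOpen s) {w : ℝ × ℝ → ℝ}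
    (hw : ContDiffOn ℝ (⊤ : ℕ∞) w s) {p : ℝ × ℝ} (hp : p ∈ s) :
    dv (0, 1) (dv (1, 0) w) p = dv (1, 0) (dv (0, 1) w) p := by
  have hdiff : DifferentiableOn ℝ w s := hw.differentiableOn (zero_lt_one.trans_le one_le_top).ne'
  have h1 : ∀ᶠ y in 𝓝 p, HasFDerivAt w (fderiv ℝ w y) y := by
    filter_upwards [hs.mem_nhds hp] with y hy
    exact (hdiff.differentiableAt (hs.mem_nhds hy)).hasFDerivAt
  have hfd : ContDiffOn ℝ (⊤ : ℕ∞) (fderiv ℝ w) s := hw.fderiv_of_isOpen hs top_add_one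
  have h2 : HasFDerivAt (fderiv ℝ w) (fderiv ℝ (fderiv ℝ w) p) p :=
    ((hfd.differentiableOn (zero_lt_one.trans_le one_le_top).ne').differentiableAt (hs.mem_nhds hp)).hasFDerivAt
  have hsymm := second_derivative_symmetric_of_eventually h1 h2
  have key : ∀ v u : ℝ × ℝ, dv v (dv u w) p = fderiv ℝ (fderiv ℝ w) p v u := by
    intro v u
    have hc : HasFDerivAt (fun q => fderiv ℝ w q u)
        ((ContinuousLinearMap.apply ℝ ℝ u).comp (fderiv ℝ (fderiv ℝ w) p)) p :=
      (ContinuousLinearMap.apply ℝ ℝ u).hasFDerivAt.comp p h2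
    show (fderiv ℝ (fun q => fderiv ℝ w q u) p) v = _
    rw [hc.fderiv]
    simp
  rw [key, key, hsymm]

end GammaPDE

open GammaPDE in
/-- If a smooth function `V` on `(0,T) × (0,∞)` satisfies the Black–Scholes-type equation
`2∂ₜV + r(x∂ₓV − V) + (1/2)σ₀²x²∂²ₓₓV = 0`, then its gamma `Q = ∂²ₓₓV` satisfies
`2∂ₜQ + (r + σ₀²)Q + (r + 2σ₀²)x∂ₓQ + (1/2)σ₀²x²∂²ₓₓQ = 0` on `(0,T) × (0,∞)`. -/
theorem gamma_pde (r σ₀ T : ℝ) (hT : 0 < T) (V : ℝ → ℝ → ℝ)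
    (hV : ContDiffOn ℝ (⊤ : ℕ∞) (Function.uncurry V) (Set.Ioo 0 T ×ˢ Set.Ioi 0))
    (hpde : ∀ t ∈ Set.Ioo (0 : ℝ) T, ∀ x ∈ Set.Ioi (0 : ℝ),
      2 * deriv (fun s => V s x) t
        + r * (x * deriv (V t) x - V t x)
        + (1 / 2) * σ₀ ^ 2 * x ^ 2 * deriv (deriv (V t)) x = 0) :
    ∀ t ∈ Set.Ioo (0 : ℝ) T, ∀ x ∈ Set.Ioi (0 : ℝ),
      2 * deriv (fun s => deriv (deriv (V s)) x) t
        + (r + σ₀ ^ 2) * deriv (deriv (V t)) x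
        + (r + 2 * σ₀ ^ 2) * x * deriv (fun z => deriv (deriv (V t)) z) x
        + (1 / 2) * σ₀ ^ 2 * x ^ 2
            * deriv (deriv (fun z => deriv (deriv (V t)) z)) x = 0 := by
  classical
  set S : Set (ℝ × ℝ) := Set.Ioo 0 T ×ˢ Set.Ioi 0 with hSdef
  have hSo : IsOpen S := isOpen_Ioo.prod isOpen_Ioi
  set u : ℝ × ℝ → ℝ := Function.uncurry V with hudef
  have hu : ContDiffOn ℝ (⊤ : ℕ∞) u S := hV.of_le (by simp)
  set w1 : ℝ × ℝ → ℝ := dv (0, 1) u with hw1def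
  have hw1 : ContDiffOn ℝ (⊤ : ℕ∞) w1 S := smooth_dv hSo hu _
  set w2 : ℝ × ℝ → ℝ := dv (0, 1) w1 with hw2def
  have hw2 : ContDiffOn ℝ (⊤ : ℕ∞) w2 S := smooth_dv hSo hw1 _
  set w3 : ℝ × ℝ → ℝ := dv (0, 1) w2 with hw3def
  have hw3 : ContDiffOn ℝ (⊤ : ℕ∞) w3 S := smooth_dv hSo hw2 _
  set g0 : ℝ × ℝ → ℝ := dv (1, 0) u with hg0def
  have hg0 : ContDiffOn ℝ (⊤ : ℕ∞) g0 S := smooth_dv hSo hu _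
  set g1 : ℝ × ℝ → ℝ := dv (0, 1) g0 with hg1def
  have hg1 : ContDiffOn ℝ (⊤ : ℕ∞) g1 S := smooth_dv hSo hg0 _
  -- membership helper
  have hmem : ∀ {a b : ℝ}, a ∈ Set.Ioo (0 : ℝ) T → b ∈ Set.Ioi (0 : ℝ) → (a, b) ∈ S :=
    fun ha hb => Set.mk_mem_prod ha hb
  -- slice neighborhoods
  have hnhds2 : ∀ {a b : ℝ}, a ∈ Set.Ioo (0 : ℝ) T → b ∈ Set.Ioi (0 : ℝ) →
      ∀ᶠ z in 𝓝 b, (a, z) ∈ S := by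
    intro a b ha hb
    filter_upwards [isOpen_Ioi.mem_nhds hb] with z hz
    exact hmem ha hz
  have hnhds1 : ∀ {a b : ℝ}, a ∈ Set.Ioo (0 : ℝ) T → b ∈ Set.Ioi (0 : ℝ) →
      ∀ᶠ z in 𝓝 a, (z, b) ∈ S := by
    intro a b ha hb
    filter_upwards [isOpen_Ioo.mem_nhds ha] with z hz
    exact hmem hz hb
  -- conversion of spatial derivatives
  have c1 : ∀ {a b : ℝ}, (a, b) ∈ S → deriv (V a) b = w1 (a, b) := by
    intro a b hab
    exact (hasDerivAt_slice2 hSo hu hab).deriv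
  have c2 : ∀ {a b : ℝ}, a ∈ Set.Ioo (0 : ℝ) T → b ∈ Set.Ioi (0 : ℝ) →
      deriv (deriv (V a)) b = w2 (a, b) := by
    intro a b ha hb
    have heq : deriv (V a) =ᶠ[𝓝 b] fun z => w1 (a, z) := by
      filter_upwards [hnhds2 ha hb] with z hz using c1 hz
    rw [heq.deriv_eq]
    exact (hasDerivAt_slice2 hSo hw1 (hmem ha hb)).deriv
  have c3 : ∀ {a b : ℝ}, a ∈ Set.Ioo (0 : ℝ) T → b ∈ Set.Ioi (0 : ℝ) →
      deriv (fun z => deriv (deriv (V a)) z) b = w3 (a, b) := by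
    intro a b ha hb
    have heq : (fun z => deriv (deriv (V a)) z) =ᶠ[𝓝 b] fun z => w2 (a, z) := by
      filter_upwards [isOpen_Ioi.mem_nhds hb] with z hz using c2 ha hz
    rw [heq.deriv_eq]
    exact (hasDerivAt_slice2 hSo hw2 (hmem ha hb)).deriv
  -- time derivative conversion
  have ct : ∀ {a b : ℝ}, (a, b) ∈ S → deriv (fun s => V s b) a = g0 (a, b) := by
    intro a b hab
    exact (hasDerivAt_slice1 hSo hu hab).deriv
  intro t ht x hx
  set c : ℝ := (1 / 2) * σ₀ ^ 2 with hcdef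
  -- the PDE in partial-derivative form
  set L : ℝ × ℝ → ℝ := fun p => 2 * g0 p + r * (p.2 * w1 p - u p) + c * p.2 ^ 2 * w2 p
    with hLdef
  have hL0 : ∀ p ∈ S, L p = 0 := by
    rintro ⟨a, b⟩ hab
    have ha : a ∈ Set.Ioo (0 : ℝ) T := hab.1
    have hb : b ∈ Set.Ioi (0 : ℝ) := hab.2
    have := hpde a ha b hb
    rw [ct hab, c1 hab, c2 ha hb] at this
    simpa [hLdef, hudef, Function.uncurry] using this
  -- first differentiation in x
  have hM0 : ∀ p ∈ S,
      2 * g1 p + r * (p.2 * w2 p) + c * (2 * p.2 * w2 p + p.2 ^ 2 * w3 p) = 0 := by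
    rintro ⟨a, b⟩ hab
    have ha : a ∈ Set.Ioo (0 : ℝ) T := hab.1
    have hb : b ∈ Set.Ioi (0 : ℝ) := hab.2
    have hA : HasDerivAt (fun z => g0 (a, z)) (g1 (a, b)) b :=
      hasDerivAt_slice2 hSo hg0 hab
    have hB : HasDerivAt (fun z => w1 (a, z)) (w2 (a, b)) b :=
      hasDerivAt_slice2 hSo hw1 hab
    have hC : HasDerivAt (fun z => u (a, z)) (w1 (a, b)) b :=
      hasDerivAt_slice2 hSo hu hab
    have hE : HasDerivAt (fun z => w2 (a, z)) (w3 (a, b)) b :=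
      hasDerivAt_slice2 hSo hw2 hab
    have hprod : HasDerivAt (fun z => L (a, z))
        (2 * g1 (a, b) + r * ((1 * w1 (a, b) + b * w2 (a, b)) - w1 (a, b))
          + (c * (2 * b ^ 1 * 1) * w2 (a, b) + c * b ^ 2 * w3 (a, b))) b := by
      have h1 : HasDerivAt (fun z : ℝ => 2 * g0 (a, z)) (2 * g1 (a, b)) b := hA.const_mul 2
      have h2 : HasDerivAt (fun z : ℝ => z * w1 (a, z)) (1 * w1 (a, b) + b * w2 (a, b)) b :=
        (hasDerivAt_id b).mul hB
      have h3 : HasDerivAt (fun z : ℝ => r * (z * w1 (a, z) - u (a, z)))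
          (r * ((1 * w1 (a, b) + b * w2 (a, b)) - w1 (a, b))) b := (h2.sub hC).const_mul r
      have h4 : HasDerivAt (fun z : ℝ => c * z ^ 2) (c * (2 * b ^ 1 * 1)) b :=
        ((hasDerivAt_id b).pow 2).const_mul c
      have h5 : HasDerivAt (fun z : ℝ => c * z ^ 2 * w2 (a, z))
          (c * (2 * b ^ 1 * 1) * w2 (a, b) + c * b ^ 2 * w3 (a, b)) b := h4.mul hE
      exact (h1.add h3).add h5
    have hzero : HasDerivAt (fun _ : ℝ => (0 : ℝ))
        (2 * g1 (a, b) + r * ((1 * w1 (a, b) + b * w2 (a, b)) - w1 (a, b))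
          + (c * (2 * b ^ 1 * 1) * w2 (a, b) + c * b ^ 2 * w3 (a, b))) b := by
      apply hprod.congr_of_eventuallyEq
      filter_upwards [hnhds2 ha hb] with z hz
      exact (hL0 _ hz).symm
    have := hzero.unique (hasDerivAt_const _ _)
    dsimp only
    linear_combination this
  -- second differentiation in x
  have hN0 : ∀ p ∈ S,
      2 * dv (0, 1) g1 p + r * (w2 p + p.2 * w3 p)
        + c * ((2 * w2 p + 2 * p.2 * w3 p) + (2 * p.2 * w3 p + p.2 ^ 2 * dv (0, 1) w3 p))
          = 0 := by
    rintro ⟨a, b⟩ hab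
    have ha : a ∈ Set.Ioo (0 : ℝ) T := hab.1
    have hb : b ∈ Set.Ioi (0 : ℝ) := hab.2
    have hA : HasDerivAt (fun z => g1 (a, z)) (dv (0, 1) g1 (a, b)) b :=
      hasDerivAt_slice2 hSo hg1 hab
    have hB : HasDerivAt (fun z => w2 (a, z)) (w3 (a, b)) b :=
      hasDerivAt_slice2 hSo hw2 hab
    have hE : HasDerivAt (fun z => w3 (a, z)) (dv (0, 1) w3 (a, b)) b :=
      hasDerivAt_slice2 hSo hw3 hab
    have hprod : HasDerivAt
        (fun z => 2 * g1 (a, z) + r * (z * w2 (a, z)) + c * (2 * z * w2 (a, z) + z ^ 2 * w3 (a, z)))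
        (2 * dv (0, 1) g1 (a, b)
          + r * (1 * w2 (a, b) + b * w3 (a, b))
          + c * ((2 * 1 * w2 (a, b) + 2 * b * w3 (a, b))
              + ((2 * b ^ 1 * 1) * w3 (a, b) + b ^ 2 * dv (0, 1) w3 (a, b)))) b := by
      have h1 : HasDerivAt (fun z : ℝ => 2 * g1 (a, z)) (2 * dv (0, 1) g1 (a, b)) b :=
        hA.const_mul 2
      have h2 : HasDerivAt (fun z : ℝ => r * (z * w2 (a, z)))
          (r * (1 * w2 (a, b) + b * w3 (a, b))) b := ((hasDerivAt_id b).mul hB).const_mul r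
      have h3 : HasDerivAt (fun z : ℝ => 2 * z * w2 (a, z))
          (2 * 1 * w2 (a, b) + 2 * b * w3 (a, b)) b := by
        have := ((hasDerivAt_id b).const_mul (2 : ℝ)).mul hB
        exact this
      have h4 : HasDerivAt (fun z : ℝ => z ^ 2 * w3 (a, z))
          ((2 * b ^ 1 * 1) * w3 (a, b) + b ^ 2 * dv (0, 1) w3 (a, b)) b :=
        ((hasDerivAt_id b).pow 2).mul hE
      exact (h1.add h2).add ((h3.add h4).const_mul c)
    have hzero : HasDerivAt (fun _ : ℝ => (0 : ℝ))
        (2 * dv (0, 1) g1 (a, b)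
          + r * (1 * w2 (a, b) + b * w3 (a, b))
          + c * ((2 * 1 * w2 (a, b) + 2 * b * w3 (a, b))
              + ((2 * b ^ 1 * 1) * w3 (a, b) + b ^ 2 * dv (0, 1) w3 (a, b)))) b := by
      apply hprod.congr_of_eventuallyEq
      filter_upwards [hnhds2 ha hb] with z hz
      have := hM0 (a, z) hz
      simpa using this.symm
    have := hzero.unique (hasDerivAt_const _ _)
    dsimp only
    linear_combination this
  -- Clairaut swaps
  have hswap1 : ∀ p ∈ S, g1 p = dv (1, 0) w1 p := fun p hp => clairaut hSo hu hp
  have hswap2 : ∀ p ∈ S, dv (0, 1) g1 p = dv (1, 0) w2 p := by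
    intro p hp
    have heq : g1 =ᶠ[𝓝 p] dv (1, 0) w1 := by
      filter_upwards [hSo.mem_nhds hp] with q hq using hswap1 q hq
    have : dv (0, 1) g1 p = dv (0, 1) (dv (1, 0) w1) p := by
      simp only [dv]
      rw [heq.fderiv_eq]
    rw [this]
    exact clairaut hSo hw1 hp
  -- rewrite the goal
  have htx : (t, x) ∈ S := hmem ht hx
  have goal1 : deriv (fun s => deriv (deriv (V s)) x) t = dv (1, 0) w2 (t, x) := by
    have heq : (fun s => deriv (deriv (V s)) x) =ᶠ[𝓝 t] fun s => w2 (s, x) := by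
      filter_upwards [isOpen_Ioo.mem_nhds ht] with s hs using c2 hs hx
    rw [heq.deriv_eq]
    exact (hasDerivAt_slice1 hSo hw2 htx).deriv
  have goal4 : deriv (deriv (fun z => deriv (deriv (V t)) z)) x = dv (0, 1) w3 (t, x) := by
    have heq : deriv (fun z => deriv (deriv (V t)) z) =ᶠ[𝓝 x] fun z => w3 (t, z) := by
      filter_upwards [isOpen_Ioi.mem_nhds hx] with z hz using c3 ht hz
    rw [heq.deriv_eq]
    exact (hasDerivAt_slice2 hSo hw3 htx).deriv
  rw [goal1, c2 ht hx, c3 ht hx, goal4]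
  have h2 := hN0 (t, x) htx
  rw [hswap2 (t, x) htx] at h2
  simp only [hcdef] at h2 ⊢
  linear_combination h2
end
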